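/- Let G be a connected graph with at least 5 vertices whose complement has a connected component isomorphic to the cycle C_4. Then no vertex of that component is a basis forced vertex of G. -/

import Mathlib

/-!
Let `a, b, c, d` be the cycle `C₄` of `Gᶜ` in cyclic order. In `G` every vertex outside the
component is adjacent to all four, so `a, c` are twins (adjacent, with the same other neighbours)
and so are `b, d`. Swapping two twins is an automorphism of `G`, so if `a` lay in every metric
basis then so would `c`; moreover every resolving set contains `b` or `d`, since no third vertex
tells twins apart. Now a resolving set `R` containing `a`, `c` and, say, `b` stays resolving without
`a`: `c` sees all vertices other than `a, c` exactly as `a` does, and `b`, being adjacent to every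
common neighbour of `a` and `c` but not to `a`, separates `a` from them. This contradicts the
minimality of a metric basis.
-/

open SimpleGraph

def IsResolving {V : Type*} (G : SimpleGraph V) (R : Set V) : Prop :=
  ∀ x y : V, x ≠ y → ∃ r ∈ R, G.dist r x ≠ G.dist r y

noncomputable def metricDim {V : Type*} (G : SimpleGraph V) : ℕ :=
  sInf {n | ∃ R : Set V, IsResolving G R ∧ R.ncard = n}

def IsMetricBasis {V : Type*} (G : SimpleGraph V) (R : Set V) : Prop :=
  IsResolving G R ∧ R.ncard = metricDim G

def IsBasisForced {V : Type*} (G : SimpleGraph V) (v : V) : Prop :=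
  ∀ R : Set V, IsMetricBasis G R → v ∈ R

namespace SimpleGraph

variable {V V' : Type*} {G : SimpleGraph V} {G' : SimpleGraph V'}

lemma Iso.dist_apply_le (φ : G ≃g G') (u v : V) : G'.dist (φ u) (φ v) ≤ G.dist u v := by
  by_cases h : G.Reachable u v
  · obtain ⟨p, hp⟩ := h.exists_walk_length_eq_dist
    simpa [hp] using G'.dist_le (p.map φ.toHom)
  · simp [dist_eq_zero_of_not_reachable h,
      dist_eq_zero_of_not_reachable (Iso.reachable_iff.not.mpr h)]

lemma Iso.dist_apply (φ : G ≃g G') (u v : V) : G'.dist (φ u) (φ v) = G.dist u v :=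
  le_antisymm (φ.dist_apply_le u v) (by simpa using φ.symm.dist_apply_le (φ u) (φ v))

def swapTwins [DecidableEq V] {a c : V} (h : ∀ y, y ≠ a → y ≠ c → (G.Adj a y ↔ G.Adj c y)) :
    G ≃g G where
  toEquiv := Equiv.swap a c
  map_rel_iff' {x y} := by
    simp only [Equiv.swap_apply_def]
    split_ifs <;> subst_vars <;> grind [G.adj_comm, SimpleGraph.irrefl]

lemma swapTwins_apply_left [DecidableEq V] {a c : V}
    (h : ∀ y, y ≠ a → y ≠ c → (G.Adj a y ↔ G.Adj c y)) : swapTwins h a = c :=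
  Equiv.swap_apply_left a c

lemma dist_eq_dist_of_twins {a c : V} (h : ∀ y, y ≠ a → y ≠ c → (G.Adj a y ↔ G.Adj c y))
    {z : V} (hza : z ≠ a) (hzc : z ≠ c) : G.dist a z = G.dist c z := by
  classical
  have := (swapTwins h).dist_apply a z
  rwa [swapTwins_apply_left, show swapTwins h z = z from Equiv.swap_apply_of_ne_of_ne hza hzc,
    eq_comm] at this

lemma adj_iff_adj_of_compl_adj_iff {a c : V} (h : ∀ y, Gᶜ.Adj a y ↔ Gᶜ.Adj c y) (y : V)
    (hya : y ≠ a) (hyc : y ≠ c) : G.Adj a y ↔ G.Adj c y := by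
  have := h y
  rw [compl_adj, compl_adj] at this
  tauto

lemma dist_ne_dist_of_compl_adj {a c r y : V} (har : Gᶜ.Adj a r)
    (hr : ∀ z, Gᶜ.Adj r z → z = a ∨ z = c) (hay : G.Adj a y) (hyc : y ≠ c) :
    G.dist r a ≠ G.dist r y := by
  have hnar : ¬ G.Adj a r := ((compl_adj G a r).mp har).2
  have hry : G.Adj r y := by
    by_contra hn
    have hry_ne : r ≠ y := by rintro rfl; exact hnar hay
    exact (hr y ((compl_adj G r y).mpr ⟨hry_ne, hn⟩)).elim hay.ne.symm hyc
  rw [dist_eq_one_iff_adj.mpr hry, Ne, dist_eq_one_iff_adj]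
  exact fun h => hnar h.symm

namespace ConnectedComponent

variable {W : Type*} {H : SimpleGraph W} {C : G.ConnectedComponent} (e : G.induce C.supp ≃g H)

lemma adj_iso_symm_iff (j k : W) : G.Adj (e.symm j) (e.symm k) ↔ H.Adj j k :=
  e.symm.map_adj_iff

lemma exists_iso_symm_eq_of_adj {j : W} {y : V} (h : G.Adj (e.symm j) y) :
    ∃ k, H.Adj j k ∧ (e.symm k : V) = y := by
  have hy : y ∈ C.supp := C.mem_supp_of_adj_mem_supp (e.symm j).2 h
  refine ⟨e ⟨y, hy⟩, ?_, by simp⟩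
  rw [← adj_iso_symm_iff e]
  simpa using h

lemma adj_iso_symm_iff_of_adj_iff {j k : W} (h : ∀ x, H.Adj j x ↔ H.Adj k x) (y : V) :
    G.Adj (e.symm j) y ↔ G.Adj (e.symm k) y := by
  have transfer : ∀ {j k : W}, (∀ x, H.Adj j x → H.Adj k x) →
      G.Adj (e.symm j) y → G.Adj (e.symm k) y := fun h hy => by
    obtain ⟨x, hx, rfl⟩ := exists_iso_symm_eq_of_adj e hy
    exact (adj_iso_symm_iff e _ x).mpr (h x hx)
  exact ⟨transfer fun x => (h x).mp, transfer fun x => (h x).mpr⟩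

end ConnectedComponent

end SimpleGraph

section MetricBasis

variable {V : Type*} {G : SimpleGraph V} {R : Set V} {a c v : V}

lemma IsResolving.image_iso (hR : IsResolving G R) (φ : G ≃g G) : IsResolving G (φ '' R) := by
  intro x y hxy
  obtain ⟨r, hr, hne⟩ := hR (φ.symm x) (φ.symm y) (by simpa using hxy)
  refine ⟨φ r, Set.mem_image_of_mem φ hr, ?_⟩
  rwa [← φ.apply_symm_apply x, ← φ.apply_symm_apply y, φ.dist_apply, φ.dist_apply]

lemma IsMetricBasis.image_iso (hR : IsMetricBasis G R) (φ : G ≃g G) :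
    IsMetricBasis G (φ '' R) :=
  ⟨hR.1.image_iso φ, (Set.ncard_image_of_injective R φ.injective).trans hR.2⟩

lemma IsBasisForced.apply_iso (hv : IsBasisForced G v) (φ : G ≃g G) :
    IsBasisForced G (φ v) := by
  intro R hR
  obtain ⟨u, hu, rfl⟩ := hv _ (hR.image_iso φ.symm)
  simpa using hu

lemma isResolving_univ (hG : G.Connected) : IsResolving G Set.univ :=
  fun x y hxy => ⟨x, trivial, by simpa using (hG.pos_dist_of_ne hxy).ne⟩

lemma exists_isMetricBasis (hG : G.Connected) : ∃ R, IsMetricBasis G R :=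
  Nat.sInf_mem (s := {n | ∃ R : Set V, IsResolving G R ∧ R.ncard = n})
    ⟨_, Set.univ, isResolving_univ hG, rfl⟩

lemma IsMetricBasis.not_isResolving_diff_singleton [Finite V] (hR : IsMetricBasis G R)
    (ha : a ∈ R) : ¬ IsResolving G (R \ {a}) := fun h => by
  have hle : metricDim G ≤ (R \ {a}).ncard := Nat.sInf_le ⟨_, h, rfl⟩
  have hpos : 0 < R.ncard := (Set.ncard_pos R.toFinite).mpr ⟨a, ha⟩
  rw [Set.ncard_sdiff_singleton_of_mem ha, hR.2] at hle
  rw [hR.2] at hpos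
  omega

lemma IsResolving.mem_or_mem_of_dist_eq (hR : IsResolving G R) (hac : a ≠ c)
    (h : ∀ z, z ≠ a → z ≠ c → G.dist z a = G.dist z c) : a ∈ R ∨ c ∈ R := by
  obtain ⟨r, hr, hne⟩ := hR a c hac
  by_contra! hno
  exact hne (h r (ne_of_mem_of_not_mem hr hno.1) (ne_of_mem_of_not_mem hr hno.2))

lemma IsResolving.diff_singleton_of_dist_eq (hG : G.Connected) (hR : IsResolving G R)
    (hac : a ≠ c) (hc : c ∈ R) (htwin : ∀ z, z ≠ a → z ≠ c → G.dist a z = G.dist c z)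
    (hsep : ∀ y, y ≠ a → y ≠ c → G.dist a y = G.dist a c →
      ∃ r ∈ R \ {a}, G.dist r a ≠ G.dist r y) :
    IsResolving G (R \ {a}) := by
  have hc' : c ∈ R \ {a} := ⟨hc, hac.symm⟩
  have symm : ∀ {x y}, (∃ r ∈ R \ {a}, G.dist r x ≠ G.dist r y) →
      ∃ r ∈ R \ {a}, G.dist r y ≠ G.dist r x := fun ⟨r, hr, h⟩ => ⟨r, hr, h.symm⟩
  have sep_c : ∀ y, y ≠ c → ∃ r ∈ R \ {a}, G.dist r c ≠ G.dist r y := fun y hy =>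
    ⟨c, hc', by simpa [eq_comm] using (hG.pos_dist_of_ne hy.symm).ne⟩
  have sep_a : ∀ y, y ≠ a → ∃ r ∈ R \ {a}, G.dist r a ≠ G.dist r y := by
    intro y hya
    by_cases hyc : y = c
    · exact hyc ▸ symm (sep_c a hac)
    by_cases hy : G.dist a y = G.dist a c
    · exact hsep y hya hyc hy
    · exact ⟨c, hc', by rw [SimpleGraph.dist_comm, ← htwin y hya hyc]; exact Ne.symm hy⟩
  intro x y hxy
  obtain ⟨r, hr, hne⟩ := hR x y hxy
  by_cases hra : r = a
  swap
  · exact ⟨r, ⟨hr, hra⟩, hne⟩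
  by_cases hxa : x = a
  · exact hxa ▸ sep_a y (hxa ▸ hxy.symm)
  by_cases hya : y = a
  · exact symm (hya ▸ sep_a x (hya ▸ hxy))
  by_cases hxc : x = c
  · exact hxc ▸ sep_c y (hxc ▸ hxy.symm)
  by_cases hyc : y = c
  · exact symm (hyc ▸ sep_c x (hyc ▸ hxy))
  refine ⟨c, hc', ?_⟩
  rwa [← htwin x hxa hxc, ← htwin y hya hyc, ← hra]

end MetricBasis

theorem not_isBasisForced_of_compl_twins {V : Type*} [Finite V] {G : SimpleGraph V}
    (hG : G.Connected) {a b c d : V} (hac : a ≠ c) (hbd : b ≠ d)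
    (htwin_ac : ∀ y, Gᶜ.Adj a y ↔ Gᶜ.Adj c y) (htwin_bd : ∀ y, Gᶜ.Adj b y ↔ Gᶜ.Adj d y)
    (hab : Gᶜ.Adj a b) (hb_nbhd : ∀ y, Gᶜ.Adj b y → y = a ∨ y = c) :
    ¬ IsBasisForced G a := by
  classical
  intro ha
  have hGtwin_ac := adj_iff_adj_of_compl_adj_iff htwin_ac
  have hGac : G.Adj a c := by
    by_contra h
    exact Gᶜ.irrefl ((htwin_ac c).mp ((compl_adj G a c).mpr ⟨hac, h⟩))
  obtain ⟨R, hR⟩ := exists_isMetricBasis hG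
  have hcR : c ∈ R := by
    simpa [swapTwins_apply_left] using ha.apply_iso (swapTwins hGtwin_ac) R hR
  have hbdR : b ∈ R ∨ d ∈ R := hR.1.mem_or_mem_of_dist_eq hbd fun z hzb hzd => by
    rw [SimpleGraph.dist_comm, SimpleGraph.dist_comm (u := z)]
    exact dist_eq_dist_of_twins (adj_iff_adj_of_compl_adj_iff htwin_bd) hzb hzd
  have hsep : ∀ r ∈ R, Gᶜ.Adj a r → (∀ z, Gᶜ.Adj r z → z = a ∨ z = c) →
      ∀ y, y ≠ a → y ≠ c → G.dist a y = G.dist a c →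
      ∃ r' ∈ R \ {a}, G.dist r' a ≠ G.dist r' y := fun r hr har hr_nbhd y _ hyc hy => by
    rw [dist_eq_one_iff_adj.mpr hGac, dist_eq_one_iff_adj] at hy
    exact ⟨r, ⟨hr, har.ne.symm⟩, dist_ne_dist_of_compl_adj har hr_nbhd hy hyc⟩
  refine hR.not_isResolving_diff_singleton (ha R hR)
    (hR.1.diff_singleton_of_dist_eq hG hac hcR (fun z => dist_eq_dist_of_twins hGtwin_ac) ?_)
  rcases hbdR with hbR | hdR
  · exact hsep b hbR hab hb_nbhd
  · exact hsep d hdR ((htwin_bd a).mp hab.symm).symm fun y hy => hb_nbhd y ((htwin_bd y).mpr hy)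

theorem stmt14_general {V : Type*} [Fintype V] (G : SimpleGraph V) (hG : G.Connected)
    (C : Gᶜ.ConnectedComponent)
    (hiso : Nonempty ((Gᶜ.induce C.supp) ≃g cycleGraph 4)) :
    ∀ v ∈ C.supp, ¬ IsBasisForced G v := by
  intro v hv
  obtain ⟨e⟩ := hiso
  set i := e ⟨v, hv⟩
  have hcycle_ne : ∀ j : Fin 4, j ≠ j + 2 := by decide
  have hcycle_twins : ∀ j x : Fin 4, (cycleGraph 4).Adj j x ↔ (cycleGraph 4).Adj (j + 2) x := by
    decide
  have hcycle_adj : ∀ j : Fin 4, (cycleGraph 4).Adj j (j + 1) := by decide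
  have hcycle_nbhd : ∀ j x : Fin 4, (cycleGraph 4).Adj (j + 1) x → x = j ∨ x = j + 2 := by decide
  have he_ne : ∀ j : Fin 4, (e.symm j : V) ≠ e.symm (j + 2) := fun j h =>
    hcycle_ne j (e.symm.injective (Subtype.ext h))
  have hv_eq : (e.symm i : V) = v := by simp [i]
  rw [← hv_eq]
  refine not_isBasisForced_of_compl_twins hG (he_ne i) (he_ne (i + 1))
    (ConnectedComponent.adj_iso_symm_iff_of_adj_iff e (hcycle_twins i))
    (ConnectedComponent.adj_iso_symm_iff_of_adj_iff e (hcycle_twins (i + 1)))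
    ((ConnectedComponent.adj_iso_symm_iff e _ _).mpr (hcycle_adj i)) fun y hy => ?_
  obtain ⟨x, hx, rfl⟩ := ConnectedComponent.exists_iso_symm_eq_of_adj e hy
  rcases hcycle_nbhd i x hx with rfl | rfl <;> simp

theorem stmt14 {V : Type*} [Fintype V] (G : SimpleGraph V) (hG : G.Connected)
    (hcard : 5 ≤ Fintype.card V)
    (C : Gᶜ.ConnectedComponent)
    (hiso : Nonempty ((Gᶜ.induce C.supp) ≃g cycleGraph 4)) :
    ∀ v ∈ C.supp, ¬ IsBasisForced G v :=
  stmt14_general G hG C hiso
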